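/- Ordered idempotence: for all formulas F and G, the formula F × G × F (associated to the left) is HT-equivalent to F × G. -/

import Mathlib

inductive Form (α : Type) : Type
  | atom : α → Form α
  | fls  : Form α
  | and  : Form α → Form α → Form α
  | or   : Form α → Form α → Form α
  | imp  : Form α → Form α → Form α

namespace Form

variable {α : Type}

/-- ¬F abbreviates F → ⊥ -/
def neg (F : Form α) : Form α := imp F fls

/-- ⊤ abbreviates ⊥ → ⊥ -/
def tru : Form α := imp fls fls

/-- ordered disjunction F × G := F ∨ (¬F ∧ G) -/
def ox (F G : Form α) : Form α := or F (and (neg F) G)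

/-- classical satisfaction -/
def csat (T : Set α) : Form α → Prop
  | atom p  => p ∈ T
  | fls     => False
  | and F G => csat T F ∧ csat T G
  | or F G  => csat T F ∨ csat T G
  | imp F G => csat T F → csat T G

/-- here-and-there satisfaction (for interpretations ⟨H,T⟩ with H ⊆ T) -/
def htsat (H T : Set α) : Form α → Prop
  | atom p  => p ∈ H
  | fls     => False
  | and F G => htsat H T F ∧ htsat H T G
  | or F G  => htsat H T F ∨ htsat H T G
  | imp F G => (csat T F → csat T G) ∧ (¬ htsat H T F ∨ htsat H T G)

end Form

/-- HT-equivalence: satisfied by exactly the same HT-interpretations -/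
def HTEquiv {α : Type} (F G : Form α) : Prop :=
  ∀ H T : Set α, H ⊆ T → (Form.htsat H T F ↔ Form.htsat H T G)

/-- ⟨T,T⟩ is an equilibrium model of the theory Γ -/
def EqModel {α : Type} (Γ : Set (Form α)) (T : Set α) : Prop :=
  (∀ F ∈ Γ, Form.htsat T T F) ∧ ∀ H : Set α, H ⊂ T → ¬ (∀ F ∈ Γ, Form.htsat H T F)

/-- iterated ordered disjunction, associated to the left; ⊥ when empty -/
def oxList {α : Type} : List (Form α) → Form α
  | []      => Form.fls
  | a :: as => as.foldl Form.ox a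

/-- iterated disjunction, associated to the left; ⊥ when empty -/
def orList {α : Type} : List (Form α) → Form α
  | []      => Form.fls
  | a :: as => as.foldl Form.or a

/-- iterated conjunction, associated to the left; ⊤ when empty -/
def andList {α : Type} : List (Form α) → Form α
  | []      => Form.tru
  | a :: as => as.foldl Form.and a

/-!
Every HT-model ⟨H,T⟩ of a formula satisfies it classically in T, so ⟨H,T⟩ ⊨ ¬F exactly when
T ⊭ F, and ⟨H,T⟩ ⊨ F × G iff ⟨H,T⟩ ⊨ F or (T ⊭ F and ⟨H,T⟩ ⊨ G). The trailing disjunct of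
(F × G) × F then requires both T ⊭ F × G, hence T ⊭ F, and ⟨H,T⟩ ⊨ F, which is impossible.
-/

namespace Form

variable {α : Type} {H T : Set α}

theorem csat_of_htsat (hHT : H ⊆ T) : ∀ {F : Form α}, htsat H T F → csat T F
  | atom _, h => hHT h
  | fls, h => h
  | and _ _, ⟨hF, hG⟩ => ⟨csat_of_htsat hHT hF, csat_of_htsat hHT hG⟩
  | or _ _, h => h.imp (csat_of_htsat hHT) (csat_of_htsat hHT)
  | imp _ _, h => h.1

theorem htsat_neg_iff (hHT : H ⊆ T) (F : Form α) : htsat H T (neg F) ↔ ¬ csat T F := by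
  simp only [neg, htsat, csat, or_false]
  exact ⟨And.left, fun hF => ⟨hF, mt (csat_of_htsat hHT) hF⟩⟩

theorem htsat_ox_iff (hHT : H ⊆ T) (F G : Form α) :
    htsat H T (ox F G) ↔ htsat H T F ∨ (¬ csat T F ∧ htsat H T G) := by
  rw [ox, htsat, htsat, htsat_neg_iff hHT]

end Form

theorem ordered_idempotence {α : Type} (F G : Form α) :
    HTEquiv (Form.ox (Form.ox F G) F) (Form.ox F G) := by
  intro H T hHT
  rw [Form.htsat_ox_iff hHT (Form.ox F G), or_iff_left_iff_imp]
  rintro ⟨hTox, hHF⟩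
  exact absurd (Or.inl (Form.csat_of_htsat hHT hHF)) hTox
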